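/- arXiv:1309.4534 — 3 statements merged into one kernel-verified Lean document; each statement's English description precedes it below -/
import Mathlib

section
/- Let n ≥ 2 and let w₀, …, wₙ ∈ ℝⁿ satisfy w₀ + ⋯ + wₙ = 0. Define the facet normals z₀, …, zₙ by z_p := −[w₀, w₁, …, wₙ with w_p and w_{p+1} omitted] for 0 ≤ p ≤ n−1, and zₙ := (−1)^(n+1)·[w₁, …, w_{n−1}]. Let D := det of the n × n matrix whose columns are w₁, …, wₙ. Then, with indices read modulo n+1 (so w_{n+1} = w₀): ⟪w_p, z_p⟫ = D for all p, ⟪w_{p+1}, z_p⟫ = −D for all p, and ⟪w_p, z_q⟫ = 0 whenever p ≠ q and p ≠ q+1. -/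
open scoped RealInnerProductSpace BigOperators

/-- The `n × n` matrix whose first column is `w₀` and whose remaining columns are
`w 0, …, w (n - 2)`. -/
noncomputable def colMat {n : ℕ} (w₀ : EuclideanSpace ℝ (Fin n))
    (w : Fin (n - 1) → EuclideanSpace ℝ (Fin n)) : Matrix (Fin n) (Fin n) ℝ :=
  Matrix.of fun r c =>
    if _h : (c : ℕ) = 0 then w₀ r
    else w ⟨(c : ℕ) - 1, by have := c.isLt; omega⟩ r

/-- The vector product `[w 0, …, w (n-2)]` of `n - 1` vectors in `ℝⁿ`: the unique vector `v`
with `⟪w₀, v⟫ = det (w₀, w 0, …, w (n-2))` for all `w₀`. -/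
noncomputable def vprod {n : ℕ} (w : Fin (n - 1) → EuclideanSpace ℝ (Fin n)) :
    EuclideanSpace ℝ (Fin n) :=
  (WithLp.equiv 2 (Fin n → ℝ)).symm fun i => (colMat (EuclideanSpace.single i 1) w).det

/-- The facet normal `z p` of a loop `w 0, …, w n` of `n + 1` vectors in `ℝⁿ`:
`z p = -[w 0, …, w n  with  w p, w (p+1)  omitted]` for `0 ≤ p ≤ n - 1`, and
`z n = (-1)^(n+1) • [w 1, …, w (n-1)]`. -/
noncomputable def facet {n : ℕ} (w : Fin (n + 1) → EuclideanSpace ℝ (Fin n))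
    (p : Fin (n + 1)) : EuclideanSpace ℝ (Fin n) :=
  if _h : (p : ℕ) < n then
    - vprod (fun j : Fin (n - 1) =>
        if (j : ℕ) < (p : ℕ) then w ⟨(j : ℕ), by have := j.isLt; omega⟩
        else w ⟨(j : ℕ) + 2, by have := j.isLt; omega⟩)
  else
    ((-1 : ℝ) ^ (n + 1)) • vprod (fun j : Fin (n - 1) => w ⟨(j : ℕ) + 1, by have := j.isLt; omega⟩)

/-! By the defining property of the vector product, `⟪w p, facet w q⟫` is, up to sign, the
determinant of the columns `w p, w 0, …, w n` with `w q` and `w (q + 1)` omitted. It vanishes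
when `w p` is one of the remaining columns. Otherwise `p` is `q` or `q + 1`, and moving `w p` into
place leaves all the `w i` but one. As `∑ i, w i = 0`, omitting `w j` instead of `w 0` multiplies
the determinant by `(-1) ^ j`: when the omitted index moves up by one, the two determinants differ
in a single column, and their sum has a column equal to minus the sum of the others. -/

open Function

theorem Fin.succ_succAbove_of_ne {n : ℕ} {j l : Fin n} (hl : l ≠ j) :
    j.succ.succAbove l = j.castSucc.succAbove l := by
  have := Fin.val_ne_of_ne hl
  ext
  simp only [Fin.succAbove, Fin.lt_def, Fin.val_castSucc, Fin.val_succ]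
  split_ifs <;> simp <;> omega

namespace AlternatingMap

variable {R M N ι : Type*} [CommRing R] [AddCommGroup M] [AddCommGroup N] [Module R M]
  [Module R N]

theorem map_eq_zero_of_sum_eq_zero [DecidableEq ι] [Fintype ι] [Nonempty ι]
    (f : M [⋀^ι]→ₗ[R] N) {v : ι → M} (hv : ∑ i, v i = 0) : f v = 0 := by
  obtain ⟨i⟩ := ‹Nonempty ι›
  have h := f.map_update_sum Finset.univ i v v
  rwa [hv, f.map_update_zero, Finset.sum_eq_single i
    (fun j _ hji => f.map_update_self v hji.symm) (by simp), update_eq_self, eq_comm] at h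

variable {n : ℕ}

theorem map_removeNth_succ_eq_neg (f : M [⋀^Fin n]→ₗ[R] N) {w : Fin (n + 1) → M}
    (hw : ∑ i, w i = 0) (j : Fin n) :
    f (j.succ.removeNth w) = -f (j.castSucc.removeNth w) := by
  set v := j.castSucc.removeNth w
  have hupdate : j.succ.removeNth w = update v j (w j.castSucc) := by
    ext l
    rcases eq_or_ne l j with rfl | hl
    · simp [Fin.removeNth_apply]
    · simp [v, Fin.removeNth_apply, hl, Fin.succ_succAbove_of_ne hl]
  have hsum : ∑ l, update v j (w j.castSucc + v j) l = 0 := by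
    rw [Finset.sum_update_of_mem (Finset.mem_univ j), add_assoc,
      ← Finset.sum_eq_add_sum_sdiff_singleton_of_mem (Finset.mem_univ j), ← hw,
      Fin.sum_univ_succAbove w j.castSucc]
    rfl
  rw [eq_neg_iff_add_eq_zero, hupdate]
  conv_lhs => enter [2]; rw [← update_eq_self j v]
  rw [← f.map_update_add]
  have : Nonempty (Fin n) := ⟨j⟩
  exact f.map_eq_zero_of_sum_eq_zero hsum

theorem map_removeNth_of_sum_eq_zero (f : M [⋀^Fin n]→ₗ[R] N) {w : Fin (n + 1) → M}
    (hw : ∑ i, w i = 0) (i : Fin (n + 1)) :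
    f (i.removeNth w) = (-1) ^ (i : ℕ) • f (Fin.tail w) := by
  induction i using Fin.induction with
  | zero => simp
  | succ j ih =>
    rw [map_removeNth_succ_eq_neg f hw, ih, Fin.val_succ, Fin.val_castSucc, pow_succ, mul_neg_one,
      neg_smul]

theorem map_vecCons_removeNth (f : M [⋀^Fin (n + 1)]→ₗ[R] N) (v : Fin (n + 1) → M)
    (i : Fin (n + 1)) : f (Matrix.vecCons (v i) (i.removeNth v)) = (-1) ^ (i : ℕ) • f v := by
  rw [← neg_one_pow_smul_map_insertNth, Fin.insertNth_self_removeNth]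

theorem map_vecCons_removeNth_removeNth_of_sum_eq_zero (f : M [⋀^Fin (n + 1)]→ₗ[R] N)
    {w : Fin (n + 2) → M} (hw : ∑ i, w i = 0) (a : Fin (n + 2)) (b : Fin (n + 1)) :
    f (Matrix.vecCons (w (a.succAbove b)) (b.removeNth (a.removeNth w))) =
      (-1) ^ ((a : ℕ) + b) • f (Fin.tail w) := by
  rw [← Fin.removeNth_apply a w b, map_vecCons_removeNth, map_removeNth_of_sum_eq_zero f hw,
    smul_smul, ← pow_add, add_comm]

theorem map_vecCons_removeNth_removeNth_of_ne (f : M [⋀^Fin (n + 1)]→ₗ[R] N)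
    (w : Fin (n + 2) → M) {a p : Fin (n + 2)} {b : Fin (n + 1)} (ha : p ≠ a)
    (hb : p ≠ a.succAbove b) : f (Matrix.vecCons (w p) (b.removeNth (a.removeNth w))) = 0 := by
  obtain ⟨t, rfl⟩ := Fin.exists_succAbove_eq ha
  obtain ⟨s, rfl⟩ := Fin.exists_succAbove_eq fun h : t = b => hb (h ▸ rfl)
  exact f.map_eq_zero_of_eq _ (i := 0) (j := s.succ) (by simp [Fin.removeNth_apply])
    (Fin.succ_ne_zero s).symm

end AlternatingMap

noncomputable def colDet (n : ℕ) : EuclideanSpace ℝ (Fin n) [⋀^Fin n]→ₗ[ℝ] ℝ :=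
  (EuclideanSpace.basisFun (Fin n) ℝ).toBasis.det

theorem colDet_apply {n : ℕ} (v : Fin n → EuclideanSpace ℝ (Fin n)) :
    colDet n v = (Matrix.of fun r c => v c r).det := by
  rw [colDet, Module.Basis.det_apply]
  rfl

theorem det_colMat {k : ℕ} (x : EuclideanSpace ℝ (Fin (k + 1)))
    (v : Fin k → EuclideanSpace ℝ (Fin (k + 1))) :
    (colMat x v).det = colDet (k + 1) (Matrix.vecCons x v) := by
  rw [colDet_apply]
  congr 1
  ext r c
  cases c using Fin.cases <;> simp [colMat]

theorem inner_vprod {k : ℕ} (x : EuclideanSpace ℝ (Fin (k + 1)))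
    (v : Fin k → EuclideanSpace ℝ (Fin (k + 1))) :
    ⟪x, vprod v⟫ = colDet (k + 1) (Matrix.vecCons x v) := by
  have hx : ∑ i, x i • EuclideanSpace.single i (1 : ℝ) = x := by
    simpa using (EuclideanSpace.basisFun (Fin (k + 1)) ℝ).sum_repr x
  calc ⟪x, vprod v⟫
      = ∑ i, x i * colDet (k + 1) (Matrix.vecCons (EuclideanSpace.single i 1) v) := by
        simp [vprod, det_colMat, PiLp.inner_apply, mul_comm]
    _ = colDet (k + 1) (Matrix.vecCons (∑ i, x i • EuclideanSpace.single i (1 : ℝ)) v) := by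
        simp only [Matrix.vecCons]
        rw [← Fin.update_cons_zero 0, AlternatingMap.map_update_sum]
        simp_rw [AlternatingMap.map_update_smul, Fin.update_cons_zero, smul_eq_mul]
    _ = colDet (k + 1) (Matrix.vecCons x v) := by rw [hx]

section facet

variable {k : ℕ} (w : Fin (k + 2) → EuclideanSpace ℝ (Fin (k + 1)))

theorem facet_castSucc (q : Fin (k + 1)) :
    facet w q.castSucc = -vprod (q.removeNth (q.succ.removeNth w)) := by
  rw [facet, dif_pos (by simp [Fin.is_le])]
  congr 2
  funext j
  simp only [Fin.removeNth_apply]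
  split_ifs <;> congr 1 <;> ext <;> simp only [Fin.succAbove, Fin.lt_def] <;>
    split_ifs <;> simp_all <;> omega

theorem facet_castSucc' (q : Fin (k + 1)) :
    facet w q.castSucc = -vprod (q.removeNth (q.castSucc.removeNth w)) := by
  rw [facet_castSucc, Fin.removeNth_removeNth_eq_swap]
  simp

theorem facet_last :
    facet w (Fin.last (k + 1)) =
      (-1 : ℝ) ^ (k + 2) • vprod ((0 : Fin _).removeNth ((Fin.last (k + 1)).removeNth w)) := by
  rw [facet, dif_neg (by simp), Fin.removeNth_last, Fin.removeNth_zero]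
  rfl

theorem facet_last' :
    facet w (Fin.last (k + 1)) =
      (-1 : ℝ) ^ (k + 2) • vprod ((Fin.last k).removeNth ((0 : Fin _).removeNth w)) := by
  rw [facet_last, Fin.removeNth_removeNth_eq_swap]
  simp

variable {w}

theorem inner_facet_self (hw : ∑ i, w i = 0) (p : Fin (k + 2)) :
    ⟪w p, facet w p⟫ = colDet (k + 1) (Fin.tail w) := by
  cases p using Fin.lastCases with
  | last =>
    have h := (colDet (k + 1)).map_vecCons_removeNth_removeNth_of_sum_eq_zero hw 0 (Fin.last k)
    rw [Fin.zero_succAbove, Fin.succ_last] at h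
    rw [facet_last', real_inner_smul_right, inner_vprod, h, zsmul_eq_mul]
    push_cast
    rw [← mul_assoc, ← pow_add, Even.neg_one_pow ⟨k + 1, by simp; omega⟩, one_mul]
  | cast q =>
    have h := (colDet (k + 1)).map_vecCons_removeNth_removeNth_of_sum_eq_zero hw q.succ q
    rw [Fin.succAbove_succ_self] at h
    rw [facet_castSucc, inner_neg_right, inner_vprod, h, zsmul_eq_mul]
    push_cast
    rw [Odd.neg_one_pow ⟨q, by simp; omega⟩]
    ring

theorem inner_facet_add_one (hw : ∑ i, w i = 0) (p : Fin (k + 2)) :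
    ⟪w (p + 1), facet w p⟫ = -colDet (k + 1) (Fin.tail w) := by
  cases p using Fin.lastCases with
  | last =>
    have h := (colDet (k + 1)).map_vecCons_removeNth_removeNth_of_sum_eq_zero hw (Fin.last _) 0
    rw [Fin.succAbove_last, Fin.castSucc_zero] at h
    rw [Fin.last_add_one, facet_last, real_inner_smul_right, inner_vprod, h, zsmul_eq_mul]
    push_cast
    rw [← mul_assoc, ← pow_add, Odd.neg_one_pow ⟨k + 1, by simp; omega⟩]
    ring
  | cast q =>
    have h := (colDet (k + 1)).map_vecCons_removeNth_removeNth_of_sum_eq_zero hw q.castSucc q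
    rw [Fin.succAbove_castSucc_self] at h
    rw [Fin.coeSucc_eq_succ, facet_castSucc', inner_neg_right, inner_vprod, h, zsmul_eq_mul]
    push_cast
    rw [Even.neg_one_pow ⟨q, by simp⟩, one_mul]

theorem inner_facet_of_ne {p q : Fin (k + 2)} (hpq : p ≠ q) (hpq' : p ≠ q + 1) :
    ⟪w p, facet w q⟫ = 0 := by
  cases q using Fin.lastCases with
  | last =>
    rw [facet_last, real_inner_smul_right, inner_vprod,
      (colDet (k + 1)).map_vecCons_removeNth_removeNth_of_ne w hpq (by simpa using hpq'),
      mul_zero]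
  | cast q =>
    rw [facet_castSucc, inner_neg_right, inner_vprod,
      (colDet (k + 1)).map_vecCons_removeNth_removeNth_of_ne w (by simpa using hpq')
        (by simpa using hpq), neg_zero]

end facet

theorem inner_facet (n : ℕ) (hn : 2 ≤ n)
    (w : Fin (n + 1) → EuclideanSpace ℝ (Fin n)) (hw : (∑ i, w i) = 0)
    (D : ℝ) (hD : D = (Matrix.of fun r (c : Fin n) => w c.succ r).det) :
    (∀ p, ⟪w p, facet w p⟫ = D) ∧
    (∀ p, ⟪w (p + 1), facet w p⟫ = -D) ∧
    (∀ p q, p ≠ q → p ≠ q + 1 → ⟪w p, facet w q⟫ = 0) := by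
  obtain ⟨k, rfl⟩ : ∃ k, n = k + 1 := ⟨n - 1, by omega⟩
  obtain rfl : D = colDet (k + 1) (Fin.tail w) := by rw [hD, colDet_apply]; rfl
  exact ⟨inner_facet_self hw, inner_facet_add_one hw, fun _ _ => inner_facet_of_ne⟩
end

section
/- Let n ≥ 2 and let w₀, …, wₙ ∈ ℝⁿ satisfy w₀ + ⋯ + wₙ = 0. Define the facet normals z₀, …, zₙ by z_p := −[w₀, w₁, …, wₙ with w_p and w_{p+1} omitted] for 0 ≤ p ≤ n−1, and zₙ := (−1)^(n+1)·[w₁, …, w_{n−1}]. Then z₀ + z₁ + ⋯ + zₙ = 0. -/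
/-!
The vector product is alternating in its `n - 1` arguments, so the identity can be proved for an
arbitrary alternating map `D` in place of `[·]`. For `p < n - 1` the last entry of the list with
`w p, w (p + 1)` omitted is `w n = -(w 0 + ⋯ + w (n - 1))`; expanding, only the terms with `w p`
and `w (p + 1)` survive, and the one with `w p` is, after a transposition, minus the one with
`w (p + 2)` in the list for `p + 1`. Hence the sum telescopes to a single value of `D`, which a
cyclic rotation identifies with `±[w 1, …, w (n - 1)]`, cancelling `z n`.
-/

open scoped RealInnerProductSpace BigOperators

open Finset Function

section OmitPair

variable {M : Type*} {m : ℕ}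

/-- `v 0, …, v (p - 1), v (p + 2), …`, cut to length `m + 1`; indexing `v` by `ℕ` keeps all the
index arithmetic below within reach of `omega`. -/
def omitPair (m : ℕ) (v : ℕ → M) (p : ℕ) : Fin (m + 1) → M :=
  fun j => if (j : ℕ) < p then v j else v (j + 2)

theorem omitPair_last (v : ℕ → M) {p : ℕ} (hp : p ≤ m) :
    omitPair m v p (Fin.last m) = v (m + 2) := by
  simp [omitPair, hp.not_gt]

theorem update_omitPair_last_self (m : ℕ) (v : ℕ → M) :
    update (omitPair m v m) (Fin.last m) (v m) = omitPair m v (m + 1) := by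
  ext j
  rcases eq_or_ne j (Fin.last m) with rfl | hj
  · simp [omitPair]
  · have : (j : ℕ) < m := Fin.val_lt_last hj
    simp [omitPair, hj, this, Nat.lt_succ_of_lt this]

theorem update_omitPair_last_comp_swap (v : ℕ → M) {p : ℕ} (hp : p < m) :
    update (omitPair m v (p + 1)) (Fin.last m) (v (p + 2)) ∘
        Equiv.swap ⟨p, by omega⟩ (Fin.last m) =
      update (omitPair m v p) (Fin.last m) (v p) := by
  ext j
  rcases eq_or_ne j ⟨p, by omega⟩ with rfl | hjp
  · simp [omitPair, Fin.ext_iff, hp.ne]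
  rcases eq_or_ne j (Fin.last m) with rfl | hjl
  · simp [omitPair, Fin.ext_iff, hp.ne]
  · have : (j : ℕ) ≠ p := fun h => hjp (Fin.ext h)
    simp only [comp_apply, Equiv.swap_apply_of_ne_of_ne hjp hjl, update_of_ne hjl, omitPair]
    split_ifs <;> first | rfl | omega

theorem update_omitPair_zero_last_eq_comp_finRotate (m : ℕ) (v : ℕ → M) :
    update (omitPair m v 0) (Fin.last m) (v 1) =
      (fun j : Fin (m + 1) => v (j + 1)) ∘ finRotate (m + 1) := by
  ext j
  rcases eq_or_ne j (Fin.last m) with rfl | hj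
  · simp
  · simp [omitPair, hj, Fin.val_add_one]

variable {R N : Type*} [Semiring R] [AddCommGroup M] [Module R M] [AddCommGroup N] [Module R N]

namespace AlternatingMap

theorem map_update_omitPair_last_eq_zero (D : M [⋀^Fin (m + 1)]→ₗ[R] N) (v : ℕ → M)
    {p k : ℕ} (hp : p ≤ m) (hk : k < m + 2) (hkp : k ≠ p) (hkp' : k ≠ p + 1) :
    D (update (omitPair m v p) (Fin.last m) (v k)) = 0 := by
  obtain ⟨i, hi, hik⟩ : ∃ i : Fin (m + 1), i ≠ Fin.last m ∧ omitPair m v p i = v k := by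
    rcases lt_or_gt_of_ne hkp with h | h
    · exact ⟨⟨k, by omega⟩, Fin.ne_of_val_ne (by simp; omega), by simp [omitPair, h]⟩
    · refine ⟨⟨k - 2, by omega⟩, Fin.ne_of_val_ne (by simp; omega), ?_⟩
      simp only [omitPair, if_neg (show ¬ k - 2 < p by omega)]
      congr 1
      omega
  rw [← hik, D.map_update_self _ hi.symm]

theorem map_omitPair_eq_neg_add (D : M [⋀^Fin (m + 1)]→ₗ[R] N) {v : ℕ → M}
    (hv : ∑ k ∈ range (m + 3), v k = 0) {p : ℕ} (hp : p ≤ m) :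
    D (omitPair m v p) = -(D (update (omitPair m v p) (Fin.last m) (v p)) +
      D (update (omitPair m v p) (Fin.last m) (v (p + 1)))) := by
  have hlast : v (m + 2) = -∑ k ∈ range (m + 2), v k := by
    rw [sum_range_succ, add_comm] at hv
    exact eq_neg_of_add_eq_zero_left hv
  have hpair : ({p, p + 1} : Finset ℕ) ⊆ range (m + 2) := by
    intro k hk
    simp only [mem_insert, mem_singleton] at hk
    simp only [mem_range]
    omega
  conv_lhs => rw [← update_eq_self (Fin.last m) (omitPair m v p), omitPair_last v hp, hlast,
    D.map_update_neg, D.map_update_sum, ← sum_subset hpair fun k hk hkp =>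
      D.map_update_omitPair_last_eq_zero v hp (mem_range.1 hk) (by simp_all) (by simp_all)]
  rw [sum_pair (by omega)]

theorem sum_map_omitPair (D : M [⋀^Fin (m + 1)]→ₗ[R] N) {v : ℕ → M}
    (hv : ∑ k ∈ range (m + 3), v k = 0) :
    ∑ p ∈ range (m + 2), D (omitPair m v p) = (-1 : ℤ) ^ (m + 1) • D (fun j => v (j + 1)) := by
  set B : ℕ → N := fun p => D (update (omitPair m v p) (Fin.last m) (v (p + 1)))
  have hstep : ∀ p < m, D (omitPair m v p) = B (p + 1) - B p := by
    intro p hp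
    rw [D.map_omitPair_eq_neg_add hv hp.le, ← update_omitPair_last_comp_swap v hp,
      D.map_swap _ (Fin.ne_of_val_ne (by simp; omega))]
    abel
  have hB0 : B 0 = (-1 : ℤ) ^ m • D (fun j => v (j + 1)) := by
    simp only [B, update_omitPair_zero_last_eq_comp_finRotate, D.map_perm, sign_finRotate]
    simp [Units.smul_def]
  rw [sum_range_succ, sum_range_succ, sum_congr rfl fun p hp => hstep p (mem_range.1 hp),
    sum_range_sub, D.map_omitPair_eq_neg_add hv le_rfl, update_omitPair_last_self, pow_succ,
    mul_neg_one, neg_smul, ← hB0]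
  change B m - B 0 + -(_ + B m) + _ = _
  abel

end AlternatingMap

end OmitPair

def extendByZero {M : Type*} [Zero M] {N : ℕ} (w : Fin N → M) (k : ℕ) : M :=
  if h : k < N then w ⟨k, h⟩ else 0

theorem extendByZero_of_lt {M : Type*} [Zero M] {N : ℕ} (w : Fin N → M) {k : ℕ} (h : k < N) :
    extendByZero w k = w ⟨k, h⟩ :=
  dif_pos h

theorem sum_range_extendByZero {M : Type*} [AddCommMonoid M] {N : ℕ} (w : Fin N → M) :
    ∑ k ∈ range N, extendByZero w k = ∑ i, w i := by
  rw [← Fin.sum_univ_eq_sum_range]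
  exact sum_congr rfl fun i _ => extendByZero_of_lt w i.isLt

theorem det_colMat_s6 {m : ℕ} (x : EuclideanSpace ℝ (Fin (m + 1)))
    (u : Fin m → EuclideanSpace ℝ (Fin (m + 1))) :
    (colMat x u).det = Matrix.detRowAlternating (Matrix.vecCons x.ofLp fun j => (u j).ofLp) := by
  rw [← Matrix.det_transpose]
  congr 1
  ext r c
  refine Fin.cases ?_ (fun j => ?_) r <;> simp [colMat]

noncomputable def vprodAlternating (m : ℕ) :
    EuclideanSpace ℝ (Fin (m + 1)) [⋀^Fin m]→ₗ[ℝ] EuclideanSpace ℝ (Fin (m + 1)) :=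
  (WithLp.linearEquiv 2 ℝ (Fin (m + 1) → ℝ)).symm.toLinearMap.compAlternatingMap <|
    AlternatingMap.pi fun i =>
      (Matrix.detRowAlternating.curryLeft (EuclideanSpace.single i (1 : ℝ)).ofLp).compLinearMap
        (WithLp.linearEquiv 2 ℝ (Fin (m + 1) → ℝ)).toLinearMap

theorem vprodAlternating_apply {m : ℕ} (u : Fin m → EuclideanSpace ℝ (Fin (m + 1))) :
    vprodAlternating m u = vprod u := by
  ext i
  simp [vprodAlternating, vprod, det_colMat_s6]

theorem facet_of_lt {m : ℕ} (w : Fin (m + 3) → EuclideanSpace ℝ (Fin (m + 2)))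
    {p : Fin (m + 3)} (hp : (p : ℕ) < m + 2) :
    facet w p = -vprodAlternating (m + 1) (omitPair m (extendByZero w) p) := by
  rw [facet, dif_pos hp, vprodAlternating_apply]
  congr 2
  ext j : 1
  simp only [omitPair]
  split_ifs <;> rw [extendByZero_of_lt]

theorem facet_last_s6 {m : ℕ} (w : Fin (m + 3) → EuclideanSpace ℝ (Fin (m + 2))) :
    facet w (Fin.last (m + 2)) =
      (-1 : ℝ) ^ (m + 3) • vprodAlternating (m + 1) (fun j => extendByZero w (j + 1)) := by
  rw [facet, dif_neg (by simp), vprodAlternating_apply]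
  congr 2
  ext j : 1
  rw [extendByZero_of_lt]

theorem facet_sum_zero (n : ℕ) (hn : 2 ≤ n)
    (w : Fin (n + 1) → EuclideanSpace ℝ (Fin n)) (hw : (∑ i, w i) = 0) :
    (∑ p, facet w p) = 0 := by
  obtain ⟨m, rfl⟩ : ∃ m, n = m + 2 := ⟨n - 2, by omega⟩
  have hv : ∑ k ∈ range (m + 3), extendByZero w k = 0 := by rwa [sum_range_extendByZero]
  rw [Fin.sum_univ_castSucc, facet_last_s6]
  simp only [facet_of_lt w (Fin.castSucc_lt_last _), Fin.val_castSucc]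
  rw [Fin.sum_univ_eq_sum_range
      (fun p => -vprodAlternating (m + 1) (omitPair m (extendByZero w) p)),
    sum_neg_distrib, (vprodAlternating (m + 1)).sum_map_omitPair hv]
  module
end

section
/- Let n ≥ 2. Let P ⊆ (ℝⁿ)^(n+1) be the set of positive loops, i.e., tuples (u₀, …, uₙ) with u₀ + ⋯ + uₙ = 0 and det of the n × n matrix with columns u₁, …, uₙ positive. The facet map ψ, sending (w₀, …, wₙ) to (z₀, …, zₙ) where z_p := −[w₀, w₁, …, wₙ with w_p and w_{p+1} omitted] for 0 ≤ p ≤ n−1 and zₙ := (−1)^(n+1)·[w₁, …, w_{n−1}], maps P into P and is a bijection from P onto P. -/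
/-!
Let `L` be the matrix with columns `w₁, …, wₙ` and `G₀, …, Gₙ₋₁` the rows of `adj L`, so that
`⟪w_{j+1}, G_k⟫ = δ_{jk} det L`. For a loop, expanding `w₀ = -(w₁ + ⋯ + wₙ)` in the determinants
defining the facet map gives `z₀ = -G₀`, `z_{k+1} = G_k - G_{k+1}` and `zₙ = Gₙ₋₁`: the matrix
with columns `z₁, …, zₙ` is `(adj L)ᵀ` times a unipotent bidiagonal matrix. A loop is determined
by `w₁, …, wₙ`, so the theorem reduces to adjugation being a bijection of the real matrices of
positive determinant, which holds for `n ≥ 2` because `det (adj L) = (det L)^(n-1)` and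
`adj (adj L) = (det L)^(n-2) • L`.
-/

open scoped RealInnerProductSpace BigOperators

open Matrix

theorem Set.bijOn_inter_preimage_of_semiconj {α β : Type*} {e : α → β} {f : α → α} {g : β → β}
    {s : Set α} {t : Set β} (he : Set.BijOn e s Set.univ) (hf : Set.MapsTo f s s)
    (hfg : ∀ x ∈ s, e (f x) = g (e x)) (hg : Set.BijOn g t t) :
    Set.BijOn f (s ∩ e ⁻¹' t) (s ∩ e ⁻¹' t) := by
  refine ⟨fun x hx => ⟨hf hx.1, ?_⟩, fun x hx y hy hxy => ?_, fun z hz => ?_⟩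
  · rw [Set.mem_preimage, hfg x hx.1]
    exact hg.mapsTo hx.2
  · refine he.injOn hx.1 hy.1 (hg.injOn hx.2 hy.2 ?_)
    rw [← hfg x hx.1, ← hfg y hy.1, hxy]
  · obtain ⟨L, hL, hLz⟩ := hg.surjOn hz.2
    obtain ⟨x, hx, rfl⟩ := he.surjOn (Set.mem_univ L)
    exact ⟨x, ⟨hx, hL⟩, he.injOn (hf hx) hz.1 (by rw [hfg x hx, hLz])⟩

theorem zero_eq_neg_sum_tail {G : Type*} [AddCommGroup G] {n : ℕ} {w : Fin (n + 1) → G}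
    (hw : ∑ j, w j = 0) : w 0 = -∑ c, Fin.tail w c := by
  rw [Fin.sum_univ_succ] at hw
  exact eq_neg_of_add_eq_zero_left hw

namespace AlternatingMap

variable {R M N : Type*} [CommRing R] [AddCommGroup M] [Module R M] [AddCommGroup N] [Module R N]
  {k : ℕ}

theorem map_cons_removeNth (f : M [⋀^Fin (k + 1)]→ₗ[R] N) (v : Fin (k + 1) → M) (p : Fin (k + 1))
    (x : M) : f (Fin.cons x (p.removeNth v)) = (-1) ^ (p : ℕ) • f (Function.update v p x) := by
  rw [← Fin.insertNth_removeNth, f.neg_one_pow_smul_map_insertNth]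
  rfl

/-- Expanding `-∑ c, u c`, every term except those of `u q.castSucc` and `u q.succ` repeats a vector
of the tuple; moving `x` into the slot freed by the surviving vector gives the right-hand side. -/
theorem map_cons_cons_neg_sum (f : M [⋀^Fin (k + 2)]→ₗ[R] N) (u : Fin (k + 2) → M)
    (q : Fin (k + 1)) (x : M) :
    f (Fin.cons x (Fin.cons (-∑ c, u c) (q.removeNth (q.castSucc.removeNth u))))
      = f (Function.update u q.succ x) - f (Function.update u q.castSucc x) := by
  set r := q.removeNth (q.castSucc.removeNth u)
  set g := f.curryLeft x
  have hg : ∀ v, f (Fin.cons x v) = g v := fun _ => rfl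
  have hupdate : ∀ y, g (Fin.cons y r) = g (Function.update (Fin.cons 0 r) 0 y) := by
    simp [Fin.update_cons_zero]
  have hvanish : ∀ c, c ≠ q.castSucc ∧ c ≠ q.succ → g (Fin.cons (u c) r) = 0 := by
    rintro c ⟨hc, hc'⟩
    obtain ⟨c, rfl⟩ := Fin.exists_succAbove_eq hc
    obtain ⟨j, rfl⟩ := Fin.exists_succAbove_eq
      (show c ≠ q by rintro rfl; exact hc' (Fin.succAbove_castSucc_self _))
    exact g.map_eq_zero_of_eq _ (i := 0) (j := j.succ) rfl (Fin.succ_ne_zero j).symm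
  have hsucc : g (Fin.cons (u q.succ) r) = f (Function.update u q.castSucc x) := by
    have : u q.succ = q.castSucc.removeNth u q := by
      simp [Fin.removeNth, Fin.succAbove_castSucc_self]
    rw [this, g.map_cons_removeNth, Function.update_eq_self, ← hg, f.map_cons_removeNth,
      smul_smul, ← pow_add, Fin.val_castSucc, Even.neg_one_pow ⟨_, rfl⟩, one_smul]
  have hcastSucc : g (Fin.cons (u q.castSucc) r) = -f (Function.update u q.succ x) := by
    have hr : r = q.removeNth (q.succ.removeNth u) := by
      simpa [Fin.succAbove_castSucc_self] using Fin.removeNth_removeNth_eq_swap u q q.castSucc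
    have : u q.castSucc = q.succ.removeNth u q := by
      simp [Fin.removeNth, Fin.succAbove_succ_self]
    rw [hr, this, g.map_cons_removeNth, Function.update_eq_self, ← hg, f.map_cons_removeNth,
      smul_smul, ← pow_add, Fin.val_succ, Odd.neg_one_pow ⟨q, by ring⟩, neg_one_smul]
  rw [hg, hupdate, g.map_update_neg, g.map_update_sum]
  simp only [← hupdate]
  rw [Fintype.sum_eq_add q.castSucc q.succ Fin.castSucc_lt_succ.ne hvanish, hsucc, hcastSucc]
  abel

end AlternatingMap

namespace Matrix

variable {ι : Type*} [Fintype ι] [DecidableEq ι]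

theorem bijOn_adjugate_det_pos (h : 2 ≤ Fintype.card ι) :
    Set.BijOn adjugate {A : Matrix ι ι ℝ | 0 < A.det} {A | 0 < A.det} := by
  refine ⟨fun A hA => ?_, fun A hA B hB hAB => ?_, fun B (hB : 0 < B.det) => ?_⟩
  · simpa only [Set.mem_ofPred_eq, det_adjugate] using pow_pos hA _
  · have hdet : A.det = B.det := by
      have := congrArg det hAB
      rwa [det_adjugate, det_adjugate, pow_left_inj₀ hA.le hB.le (by omega)] at this
    have := congrArg adjugate hAB
    rw [adjugate_adjugate _ (by omega), adjugate_adjugate _ (by omega), hdet] at this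
    exact smul_right_injective _ (pow_pos hB _).ne' this
  · set d := B.det
    set c := (d ^ (Fintype.card ι - 2))⁻¹ ^ ((Fintype.card ι - 1 : ℕ)⁻¹ : ℝ)
    have hc : 0 < c := by positivity
    have hc_pow : c ^ (Fintype.card ι - 1) * d ^ (Fintype.card ι - 2) = 1 := by
      rw [Real.rpow_inv_natCast_pow (by positivity) (by omega), inv_mul_cancel₀ (by positivity)]
    refine ⟨c • adjugate B, ?_, ?_⟩
    · rw [Set.mem_ofPred_eq, det_smul, det_adjugate]
      positivity
    · rw [adjugate_smul, adjugate_adjugate _ (by omega), smul_smul, hc_pow, one_smul]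

theorem bijOn_mul_right_det_pos {T : Matrix ι ι ℝ} (hT : 0 < T.det) :
    Set.BijOn (· * T) {A : Matrix ι ι ℝ | 0 < A.det} {A | 0 < A.det} := by
  have hT' : IsUnit T.det := hT.ne'.isUnit
  refine ⟨fun A hA => ?_, fun A _ B _ hAB => ?_, fun B (hB : 0 < B.det) => ⟨B * T⁻¹, ?_, ?_⟩⟩
  · simpa only [Set.mem_ofPred_eq, det_mul] using mul_pos hA hT
  · simpa [mul_nonsing_inv_cancel_right _ _ hT'] using congrArg (· * T⁻¹) hAB
  · simp only [Set.mem_ofPred_eq, det_mul, det_nonsing_inv, Ring.inverse_eq_inv']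
    positivity
  · simp [Matrix.mul_assoc, nonsing_inv_mul _ hT']

theorem bijOn_transpose_det_pos :
    Set.BijOn transpose {A : Matrix ι ι ℝ | 0 < A.det} {A | 0 < A.det} :=
  ⟨fun A hA => by simpa using hA, transpose_injective.injOn,
    fun B hB => ⟨Bᵀ, by simpa using hB, transpose_transpose B⟩⟩

section diffMatrix

/-- Right multiplication by `diffMatrix k` replaces each column by its difference with the next
one. -/
def diffMatrix (k : ℕ) : Matrix (Fin k) (Fin k) ℝ :=
  of fun j c => if j = c then 1 else if (j : ℕ) = c + 1 then -1 else 0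

theorem det_diffMatrix (k : ℕ) : (diffMatrix k).det = 1 := by
  rw [det_of_isLowerTriangular _ fun j c (hjc : j < c) => ?_]
  · simp [diffMatrix]
  · simp only [diffMatrix, of_apply, hjc.ne, if_false, ite_eq_right_iff]
    intro h
    exact absurd hjc (by rw [Fin.lt_def]; omega)

variable {κ : Type*} {k : ℕ} (A : Matrix κ (Fin (k + 1)) ℝ) (r : κ)

theorem mul_diffMatrix_castSucc (q : Fin k) :
    (A * diffMatrix (k + 1)) r q.castSucc = A r q.castSucc - A r q.succ := by
  rw [mul_apply, Fintype.sum_eq_add q.castSucc q.succ Fin.castSucc_lt_succ.ne]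
  · simp [diffMatrix, Fin.castSucc_lt_succ.ne', sub_eq_add_neg]
  · rintro j ⟨h₁, h₂⟩
    simp only [diffMatrix, of_apply, h₁, if_false, mul_eq_zero, ite_eq_right_iff]
    exact Or.inr fun h => absurd (Fin.ext (by simpa using h)) h₂

theorem mul_diffMatrix_last : (A * diffMatrix (k + 1)) r (Fin.last k) = A r (Fin.last k) := by
  rw [mul_apply, Fintype.sum_eq_single (Fin.last k)]
  · simp [diffMatrix]
  · intro j hj
    simp only [diffMatrix, of_apply, hj, if_false, mul_eq_zero, ite_eq_right_iff]
    exact Or.inr fun h => absurd j.isLt (by simp at h; omega)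

end diffMatrix

end Matrix

section Euclidean

variable {n : ℕ}

noncomputable abbrev volForm (n : ℕ) : EuclideanSpace ℝ (Fin n) [⋀^Fin n]→ₗ[ℝ] ℝ :=
  (EuclideanSpace.basisFun (Fin n) ℝ).toBasis.det

def tailMatrix (w : Fin (n + 1) → EuclideanSpace ℝ (Fin n)) : Matrix (Fin n) (Fin n) ℝ :=
  Matrix.of fun r c => w c.succ r

theorem volForm_apply (v : Fin n → EuclideanSpace ℝ (Fin n)) :
    volForm n v = (Matrix.of fun r c => v c r).det := by
  rw [Module.Basis.det_apply]; rfl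

theorem vprod_apply {m : ℕ} (v : Fin m → EuclideanSpace ℝ (Fin (m + 1))) (i : Fin (m + 1)) :
    vprod v i = volForm (m + 1) (Fin.cons (EuclideanSpace.single i 1) v) := by
  simp only [vprod, WithLp.equiv_symm_apply, PiLp.toLp_apply, volForm_apply]
  congr 1
  ext r c
  cases c using Fin.cases <;> simp [colMat]

theorem adjugate_tailMatrix_apply (w : Fin (n + 1) → EuclideanSpace ℝ (Fin n)) (k i : Fin n) :
    adjugate (tailMatrix w) k i
      = volForm n (Function.update (Fin.tail w) k (EuclideanSpace.single i 1)) := by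
  have h := congrFun (cramer_eq_adjugate_mulVec (tailMatrix w) (Pi.single i 1)) k
  rw [mulVec_single_one, col_apply, cramer_apply] at h
  rw [← h, volForm_apply]
  congr 1
  ext r c
  by_cases h : c = k
  · subst h; simp [Pi.single_apply]
  · simp [tailMatrix, h, Fin.tail]

theorem bijOn_tailMatrix :
    Set.BijOn tailMatrix {w : Fin (n + 1) → EuclideanSpace ℝ (Fin n) | ∑ j, w j = 0} Set.univ := by
  refine ⟨Set.mapsTo_univ _ _, fun w hw w' hw' h => ?_, fun L _ => ?_⟩
  · have htail : Fin.tail w = Fin.tail w' := funext fun c => PiLp.ext fun r => congrFun₂ h r c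
    rw [← Fin.cons_self_tail w, ← Fin.cons_self_tail w', zero_eq_neg_sum_tail hw,
      zero_eq_neg_sum_tail hw', htail]
  · set v : Fin n → EuclideanSpace ℝ (Fin n) := fun c => WithLp.toLp 2 fun r => L r c
    refine ⟨Fin.cons (-∑ c, v c) v, ?_, ?_⟩
    · simp [Set.mem_ofPred_eq, Fin.sum_univ_succ]
    · ext r c
      simp [tailMatrix, v]

end Euclidean

section FacetFormula

variable {m : ℕ} (w : Fin (m + 3) → EuclideanSpace ℝ (Fin (m + 2))) (i : Fin (m + 2))

theorem facet_zero_apply : facet w 0 i = -adjugate (tailMatrix w) 0 i := by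
  have hfam : (fun j : Fin (m + 2 - 1) =>
      if (j : ℕ) < ((0 : Fin (m + 3)) : ℕ) then w ⟨j, by omega⟩ else w ⟨j + 2, by omega⟩)
      = Fin.removeNth 0 (Fin.tail w) :=
    rfl
  rw [facet, dif_pos (by simp), PiLp.neg_apply, vprod_apply (m := m + 1), hfam,
    AlternatingMap.map_cons_removeNth, adjugate_tailMatrix_apply]
  simp

theorem facet_last_apply : facet w (Fin.last _) i = adjugate (tailMatrix w) (Fin.last _) i := by
  have hfam : (fun j : Fin (m + 2 - 1) => w ⟨j + 1, by omega⟩)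
      = Fin.removeNth (Fin.last _) (Fin.tail w) := by
    rw [Fin.removeNth_last]
    rfl
  rw [facet, dif_neg (by simp), PiLp.smul_apply, vprod_apply (m := m + 1), hfam,
    AlternatingMap.map_cons_removeNth, adjugate_tailMatrix_apply, smul_eq_mul, zsmul_eq_mul,
    Int.cast_pow, Int.cast_neg, Int.cast_one, ← mul_assoc, ← pow_add, Fin.val_last,
    Even.neg_one_pow ⟨m + 2, by ring⟩, one_mul]

theorem facet_castSucc_succ_apply (hw : ∑ j, w j = 0) (q : Fin (m + 1)) :
    facet w q.castSucc.succ i = adjugate (tailMatrix w) q.castSucc i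
      - adjugate (tailMatrix w) q.succ i := by
  have hfam : (fun j : Fin (m + 2 - 1) =>
      if (j : ℕ) < (q.castSucc.succ : ℕ) then w ⟨j, by omega⟩ else w ⟨j + 2, by omega⟩)
      = Fin.cons (-∑ c, Fin.tail w c) (q.removeNth (q.castSucc.removeNth (Fin.tail w))) := by
    funext j
    cases j using Fin.cases with
    | zero => simp [zero_eq_neg_sum_tail hw]
    | succ j =>
      simp only [Fin.cons_succ, Fin.removeNth, Fin.tail, Fin.succAbove, Fin.lt_def,
        Fin.val_succ, Fin.val_castSucc]
      split_ifs <;> congr 1 <;> ext <;> simp at * <;> omega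
  rw [facet, dif_pos (by simp; omega), PiLp.neg_apply, vprod_apply (m := m + 1), hfam,
    AlternatingMap.map_cons_cons_neg_sum, adjugate_tailMatrix_apply, adjugate_tailMatrix_apply]
  ring

end FacetFormula

section Loop

variable {m : ℕ} {w : Fin (m + 3) → EuclideanSpace ℝ (Fin (m + 2))}

theorem tailMatrix_facet (hw : ∑ j, w j = 0) :
    tailMatrix (facet w) = (adjugate (tailMatrix w))ᵀ * diffMatrix (m + 2) := by
  ext r c
  cases c using Fin.lastCases with
  | last => rw [mul_diffMatrix_last]; exact facet_last_apply w r
  | cast q => rw [mul_diffMatrix_castSucc]; exact facet_castSucc_succ_apply w r hw q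

theorem sum_facet (hw : ∑ j, w j = 0) : ∑ p, facet w p = 0 := by
  ext i
  simp only [WithLp.ofLp_sum, Finset.sum_apply, PiLp.zero_apply]
  rw [Fin.sum_univ_succ, Fin.sum_univ_castSucc, facet_zero_apply, Fin.succ_last, facet_last_apply]
  simp only [facet_castSucc_succ_apply w i hw, Finset.sum_sub_distrib]
  have h₁ := Fin.sum_univ_castSucc fun c => adjugate (tailMatrix w) c i
  have h₂ := Fin.sum_univ_succ fun c => adjugate (tailMatrix w) c i
  linarith

end Loop

theorem facet_map_bijOn_positive_loops (n : ℕ) (hn : 2 ≤ n) :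
    Set.BijOn (fun w : Fin (n + 1) → EuclideanSpace ℝ (Fin n) => facet w)
      {u | (∑ i, u i) = 0 ∧ 0 < (Matrix.of fun r (c : Fin n) => u c.succ r).det}
      {u | (∑ i, u i) = 0 ∧ 0 < (Matrix.of fun r (c : Fin n) => u c.succ r).det} := by
  obtain ⟨m, rfl⟩ : ∃ m, n = m + 2 := ⟨n - 2, by omega⟩
  have hΦ : Set.BijOn (fun L => (adjugate L)ᵀ * diffMatrix (m + 2))
      {A | 0 < A.det} {A | 0 < A.det} :=
    ((bijOn_mul_right_det_pos (by simp [det_diffMatrix])).comp bijOn_transpose_det_pos).comp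
      (bijOn_adjugate_det_pos (by simp))
  exact Set.bijOn_inter_preimage_of_semiconj (e := tailMatrix) bijOn_tailMatrix
    (fun w hw => sum_facet hw) (fun w hw => tailMatrix_facet hw) hΦ
end
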